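/- arXiv:1112.6067 — 2 statements merged into one kernel-verified Lean document; each statement's English description precedes it below -/
import Mathlib

section
/- With the same setup for four sequences f₁,…,f₄ satisfying the Hecke recursion at p, and σ their termwise sum, the quartic ∏(X − f_i(p)) equals X⁴ − σ_p X³ + ½(σ_p² − (σ_{p²}+4p^{k-1}))X² − ⅙(σ_p³ − σ_p(3σ_{p²}+8p^{k-1}) + 2σ_{p³})X + (1/24)(σ_p⁴ − 2σ_p²(3σ_{p²}+4p^{k-1}) + 8σ_p σ_{p³} + 3σ_{p²}(σ_{p²}+2p^{k-1}) − 6σ_{p⁴}). -/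
open Polynomial

lemma hecke_powers (p k : ℕ) (f : ℕ → ℂ) (h0 : f 1 = 1)
    (h : ∀ n : ℕ, 2 ≤ n →
      f p * f (p ^ (n - 1)) = f (p ^ n) + (p : ℂ) ^ (k - 1) * f (p ^ (n - 2))) :
    f (p ^ 2) = f p ^ 2 - (p : ℂ) ^ (k - 1) ∧
    f (p ^ 3) = f p ^ 3 - 2 * (p : ℂ) ^ (k - 1) * f p ∧
    f (p ^ 4) = f p ^ 4 - 3 * (p : ℂ) ^ (k - 1) * f p ^ 2 + ((p : ℂ) ^ (k - 1)) ^ 2 := by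
  have e2 := h 2 (by norm_num)
  have e3 := h 3 (by norm_num)
  have e4 := h 4 (by norm_num)
  norm_num [h0, pow_one] at e2 e3 e4
  have h2 : f (p ^ 2) = f p ^ 2 - (p : ℂ) ^ (k - 1) := by
    linear_combination -e2
  have h3 : f (p ^ 3) = f p ^ 3 - 2 * (p : ℂ) ^ (k - 1) * f p := by
    linear_combination f p * h2 - e3
  have h4 : f (p ^ 4) = f p ^ 4 - 3 * (p : ℂ) ^ (k - 1) * f p ^ 2 + ((p : ℂ) ^ (k - 1)) ^ 2 := by
    linear_combination f p * h3 - e4 - (p:ℂ) ^ (k-1) * h2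
  exact ⟨h2, h3, h4⟩

/-- For four normalized Hecke eigenform coefficient sequences at `p` of weight `k`, with
`σ_n = Σ_i f_i(n)`, the monic quartic with roots the `a_p(f_i)` is as stated. -/
theorem quartic_of_four_eigenforms (p k : ℕ) (hp : 0 < p) (hk : 0 < k)
    (f₁ f₂ f₃ f₄ σ : ℕ → ℂ)
    (h₁0 : f₁ 1 = 1) (h₂0 : f₂ 1 = 1) (h₃0 : f₃ 1 = 1) (h₄0 : f₄ 1 = 1)
    (h₁ : ∀ n : ℕ, 2 ≤ n →
      f₁ p * f₁ (p ^ (n - 1)) = f₁ (p ^ n) + (p : ℂ) ^ (k - 1) * f₁ (p ^ (n - 2)))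
    (h₂ : ∀ n : ℕ, 2 ≤ n →
      f₂ p * f₂ (p ^ (n - 1)) = f₂ (p ^ n) + (p : ℂ) ^ (k - 1) * f₂ (p ^ (n - 2)))
    (h₃ : ∀ n : ℕ, 2 ≤ n →
      f₃ p * f₃ (p ^ (n - 1)) = f₃ (p ^ n) + (p : ℂ) ^ (k - 1) * f₃ (p ^ (n - 2)))
    (h₄ : ∀ n : ℕ, 2 ≤ n →
      f₄ p * f₄ (p ^ (n - 1)) = f₄ (p ^ n) + (p : ℂ) ^ (k - 1) * f₄ (p ^ (n - 2)))
    (hσ : ∀ n, σ n = f₁ n + f₂ n + f₃ n + f₄ n) :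
    (X - C (f₁ p)) * (X - C (f₂ p)) * (X - C (f₃ p)) * (X - C (f₄ p)) =
      X ^ 4 - C (σ p) * X ^ 3
        + C ((σ p ^ 2 - (σ (p ^ 2) + 4 * (p : ℂ) ^ (k - 1))) / 2) * X ^ 2
        - C ((σ p ^ 3 - σ p * (3 * σ (p ^ 2) + 8 * (p : ℂ) ^ (k - 1))
            + 2 * σ (p ^ 3)) / 6) * X
        + C ((σ p ^ 4 - 2 * σ p ^ 2 * (3 * σ (p ^ 2) + 4 * (p : ℂ) ^ (k - 1))
            + 8 * σ p * σ (p ^ 3)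
            + 3 * σ (p ^ 2) * (σ (p ^ 2) + 2 * (p : ℂ) ^ (k - 1))
            - 6 * σ (p ^ 4)) / 24) := by
  obtain ⟨a2, a3, a4⟩ := hecke_powers p k f₁ h₁0 h₁
  obtain ⟨b2, b3, b4⟩ := hecke_powers p k f₂ h₂0 h₂
  obtain ⟨c2, c3, c4⟩ := hecke_powers p k f₃ h₃0 h₃
  obtain ⟨d2, d3, d4⟩ := hecke_powers p k f₄ h₄0 h₄
  set a := f₁ p; set b := f₂ p; set c := f₃ p; set d := f₄ p
  have hE2 : (σ p ^ 2 - (σ (p ^ 2) + 4 * (p : ℂ) ^ (k - 1))) / 2 =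
      a * b + a * c + a * d + b * c + b * d + c * d := by
    rw [hσ, hσ, a2, b2, c2, d2]; ring
  have hE3 : (σ p ^ 3 - σ p * (3 * σ (p ^ 2) + 8 * (p : ℂ) ^ (k - 1))
      + 2 * σ (p ^ 3)) / 6 = a * b * c + a * b * d + a * c * d + b * c * d := by
    rw [hσ, hσ, hσ, a2, b2, c2, d2, a3, b3, c3, d3]; ring
  have hE4 : (σ p ^ 4 - 2 * σ p ^ 2 * (3 * σ (p ^ 2) + 4 * (p : ℂ) ^ (k - 1))
      + 8 * σ p * σ (p ^ 3)
      + 3 * σ (p ^ 2) * (σ (p ^ 2) + 2 * (p : ℂ) ^ (k - 1))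
      - 6 * σ (p ^ 4)) / 24 = a * b * c * d := by
    rw [hσ, hσ, hσ, hσ, a2, b2, c2, d2, a3, b3, c3, d3, a4, b4, c4, d4]; ring
  rw [hE2, hE3, hE4, hσ]
  simp only [map_add, map_mul]
  ring
end

section
/- The space of modular forms of weight 12 for SL₂(ℤ) whose q-expansions lie in q²·ℂ[[q]] (i.e. vanish to order ≥ 2 at infinity) is zero. -/
open ModularForm SlashInvariantFormClass
open scoped CongruenceSubgroup

open UpperHalfPlane PowerSeries

lemma UpperHalfPlane.two_le_order_qExpansion {h : ℝ} {f : ℍ → ℂ}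
    (h0 : cuspFunction h f 0 = 0) (h1 : deriv (cuspFunction h f) 0 = 0) :
    2 ≤ (qExpansion h f).order := by
  refine nat_le_order _ 2 fun i hi => ?_
  interval_cases i <;> simp [qExpansion_coeff, h0, h1]

theorem ModularForm.sturm_bound_Gamma_one {k : ℤ} {f : ModularForm Γ(1) k}
    (hf : (↑(k.toNat / 12) : ℕ∞) < (qExpansion 1 f).order) : f = 0 := by
  have hSL : f.copy f rfl CongruenceSubgroup.Gamma_one_coe_eq_SL.symm = 0 :=
    sturm_bound_levelOne hf
  ext τ
  exact congr($hSL τ)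

/-- A modular form of weight 12 for `SL₂(ℤ)` whose `q`-expansion vanishes to order `≥ 2`
at infinity (i.e. `a₀ = a₁ = 0`) is zero. -/
theorem level_one_weight_twelve_order_two_vanishing (f : ModularForm Γ(1) 12)
    (h0 : UpperHalfPlane.cuspFunction 1 f 0 = 0)
    (h1 : deriv (UpperHalfPlane.cuspFunction 1 f) 0 = 0) :
    f = 0 :=
  sturm_bound_Gamma_one <| lt_of_lt_of_le (by decide) (two_le_order_qExpansion h0 h1)
end
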